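/- For every i = 1, …, r and every v ∈ V one has δ(u_i(v)) = f_i(v), where u_i = (r/(2|T|_c))·D_c∘f_i and |T|_c = c(s_ℓ)|T_ℓ| + c(s_p)|T_p| is assumed nonzero. -/

import Mathlib

open scoped TensorProduct
noncomputable section

abbrev Vc (r : ℕ) := Fin r → ℂ
abbrev Pc (r : ℕ) := MvPolynomial (Fin r) ℂ
abbrev Ec (r : ℕ) := ExteriorAlgebra ℂ (Vc r)
abbrev Wc (r : ℕ) := Ec r ⊗[ℂ] Pc r

variable {r : ℕ}

/-- The standard symmetric bilinear form on `ℂ^r`. -/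
def bil (x y : Vc r) : ℂ := ∑ i, x i * y i

/-- A vector of `ℂ^r` viewed as a degree-one polynomial. -/
def linP (v : Vc r) : Pc r := ∑ i, MvPolynomial.C (v i) * MvPolynomial.X i

/-- The action of a linear automorphism of `V` on polynomials (i.e. on `S(V)`). -/
def pAct (g : Vc r ≃ₗ[ℂ] Vc r) : Pc r →ₐ[ℂ] Pc r :=
  MvPolynomial.aeval fun i => linP (g (Pi.single i 1))

/-- The action of a linear automorphism of `V` on the exterior algebra of `V`. -/
def eAct (g : Vc r ≃ₗ[ℂ] Vc r) : Ec r →ₐ[ℂ] Ec r :=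
  ExteriorAlgebra.map (g : Vc r →ₗ[ℂ] Vc r)

/-- The diagonal action of a linear automorphism of `V` on the Weil algebra `⋀V ⊗ S(V)`. -/
def wAct (g : Vc r ≃ₗ[ℂ] Vc r) : Wc r →ₐ[ℂ] Wc r :=
  Algebra.TensorProduct.map (eAct g) (pAct g)

/-- A vector of `V` viewed inside the exterior algebra. -/
def exti (v : Vc r) : Ec r := ExteriorAlgebra.ι ℂ v

/-- The de Rham differential on the Weil algebra: `d(q ⊗ k) = ∑ᵢ (xᵢ ∧ q) ⊗ ∂k/∂xᵢ`. -/
def deRham : Wc r →ₗ[ℂ] Wc r :=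
  ∑ i, TensorProduct.map (LinearMap.mulLeft ℂ (exti (Pi.single i 1))) ((MvPolynomial.pderiv i).toLinearMap)

/-- The directional derivative `∂_v`. -/
def dirDeriv (v : Vc r) : Pc r →ₗ[ℂ] Pc r := ∑ i, v i • (MvPolynomial.pderiv i).toLinearMap

/-- `g` is a reflection with root `a`, with respect to the standard bilinear form. -/
def IsReflRoot (g : Vc r ≃ₗ[ℂ] Vc r) (a : Vc r) : Prop :=
  a ≠ 0 ∧ g a = -a ∧ ∀ v, bil a v = 0 → g v = v

/-- The relation whose associated two-sided ideal is `𝒲J`, the ideal generated by the `ψᵢ`. -/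
def relJ (ψ : Fin r → Pc r) : Wc r → Wc r → Prop :=
  fun x y => (∃ i, x = (1 : Ec r) ⊗ₜ[ℂ] ψ i) ∧ y = 0

/-- `B = ⋀V ⊗ H = 𝒲/𝒲J`. -/
abbrev Bc (ψ : Fin r → Pc r) := RingQuot (relJ ψ)

/-- The quotient map `π : 𝒲 → B`. -/
def πB (ψ : Fin r → Pc r) : Wc r →ₐ[ℂ] Bc ψ := RingQuot.mkAlgHom ℂ (relJ ψ)

/-- The Solomon elements `pᵢ = π(d(1 ⊗ ψᵢ))`. -/
def pSol (ψ : Fin r → Pc r) (i : Fin r) : Bc ψ := πB ψ (deRham ((1 : Ec r) ⊗ₜ[ℂ] ψ i))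

/-- The covariants `fᵢ(v) = π(1 ⊗ ∂_v ψᵢ)`. -/
def fcov (ψ : Fin r → Pc r) (i : Fin r) (v : Vc r) : Bc ψ :=
  πB ψ ((1 : Ec r) ⊗ₜ[ℂ] dirDeriv v (ψ i))

/-- The `B`-valued pairing `E(φ, χ) = ∑ᵢ φ(xᵢ)·χ(xᵢ)` on maps `V → B`. -/
def Eform (ψ : Fin r → Pc r) (φ χ : Vc r → Bc ψ) : Bc ψ :=
  ∑ i, φ (Pi.single i 1) * χ (Pi.single i 1)


/-- The covariants `uᵢ = (r/(2|T|))·D∘fᵢ`, where `D` (given here as the operator `DB` on `B`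
induced by `D = ∑_{s ∈ T} ∇ₛ`) is the Dunkl differential with `c = 1`. -/
def ucov (ψ : Fin r → Pc r) (T : Finset (Vc r ≃ₗ[ℂ] Vc r)) (DB : Bc ψ →ₗ[ℂ] Bc ψ)
    (i : Fin r) (v : Vc r) : Bc ψ :=
  ((r : ℂ) / (2 * T.card)) • DB (fcov ψ i v)

/-!
The element `z = ∑ₛ c(s)·s` of the group algebra commutes with `W` because `c` is a class
function, so by Schur's lemma it acts on `V` by a scalar `μ`; comparing traces, every
reflection having trace `r - 2`, gives `μ r = |T|_c (r - 2)`.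

For a reflection `s` and `k ∈ S(V)`, `k - s·k = αₛ m` is divisible by the root, so
`∇ₛ(1 ⊗ k) = αₛ ⊗ m` and `δ∇ₛ(1 ⊗ k) = 1 ⊗ (k - s·k)`. For `k = ∂ᵥψᵢ` the invariance of `ψᵢ`
gives `s·k = ∂_{sv}ψᵢ`, hence `δ D_c(1 ⊗ k) = 1 ⊗ (|T|_c k - ∂_{zv}ψᵢ) = (|T|_c - μ)(1 ⊗ k)`,
and `|T|_c - μ = 2|T|_c / r`.
-/

section Schur

variable {K V : Type*} [Field K] [IsAlgClosed K] [AddCommGroup V] [Module K V]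
  [FiniteDimensional K V] [Nontrivial V]

theorem exists_eq_smul_of_commute_of_irreducible (W : Subgroup (V ≃ₗ[K] V))
    (hWirr : ∀ p : Submodule K V, (∀ g ∈ W, ∀ v ∈ p, g v ∈ p) → p = ⊥ ∨ p = ⊤)
    (z : Module.End K V) (hz : ∀ w ∈ W, ∀ v, z (w v) = w (z v)) :
    ∃ μ : K, ∀ v, z v = μ • v := by
  obtain ⟨μ, hμ⟩ := Module.End.exists_eigenvalue z
  have hstable : ∀ g ∈ W, ∀ v ∈ z.eigenspace μ, g v ∈ z.eigenspace μ := by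
    intro g hg v hv
    rw [Module.End.mem_eigenspace_iff] at hv ⊢
    rw [hz g hg v, hv, map_smul]
  have htop : z.eigenspace μ = ⊤ := (hWirr _ hstable).resolve_left hμ
  exact ⟨μ, fun v => Module.End.mem_eigenspace_iff.mp (htop ▸ Submodule.mem_top)⟩

end Schur

section ClassSum

variable {K V : Type*} [Field K] [AddCommGroup V] [Module K V]

theorem sum_smul_conj_apply_comm (W : Subgroup (V ≃ₗ[K] V)) (T : Finset (V ≃ₗ[K] V))
    (c : (V ≃ₗ[K] V) → K) (hTconj : ∀ s ∈ T, ∀ w ∈ W, w * s * w⁻¹ ∈ T)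
    (hc : ∀ s ∈ T, ∀ w ∈ W, c (w * s * w⁻¹) = c s) {w : V ≃ₗ[K] V} (hw : w ∈ W) (u : V) :
    ∑ s ∈ T, c s • s (w u) = w (∑ s ∈ T, c s • s u) := by
  have hconj_inv : ∀ s ∈ T, w⁻¹ * s * w ∈ T := fun s hs => by
    simpa using hTconj s hs w⁻¹ (inv_mem hw)
  rw [map_sum]
  refine Finset.sum_bij' (fun s _ => w⁻¹ * s * w) (fun s _ => w * s * w⁻¹) hconj_inv
    (fun s hs => hTconj s hs w hw) (fun s _ => by group) (fun s _ => by group) fun s hs => ?_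
  have hcs : c (w⁻¹ * s * w) = c s := by simpa using hc s hs w⁻¹ (inv_mem hw)
  rw [hcs, map_smul]
  exact congrArg (c s • ·) (w.apply_symm_apply (s (w u))).symm

theorem sum_eq_card_mul_of_conj_class (W : Subgroup (V ≃ₗ[K] V)) (S : Finset (V ≃ₗ[K] V))
    (c : (V ≃ₗ[K] V) → K) {s₀ : V ≃ₗ[K] V} (hc : ∀ w ∈ W, c (w * s₀ * w⁻¹) = c s₀)
    (hclass : ∀ s ∈ S, ∃ w ∈ W, w * s₀ * w⁻¹ = s) :
    ∑ s ∈ S, c s = c s₀ * S.card := by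
  rw [Finset.sum_congr rfl fun s hs => ?_, Finset.sum_const, nsmul_eq_mul, mul_comm]
  obtain ⟨w, hw, rfl⟩ := hclass s hs
  exact hc w hw

theorem sum_eq_of_two_conj_classes [DecidableEq (V ≃ₗ[K] V)] (W : Subgroup (V ≃ₗ[K] V))
    (T Tl Tp : Finset (V ≃ₗ[K] V)) (c : (V ≃ₗ[K] V) → K)
    (hTsplit : ∀ s, s ∈ T ↔ s ∈ Tl ∨ s ∈ Tp) (hTdisj : Disjoint Tl Tp)
    (hc : ∀ s ∈ T, ∀ w ∈ W, c (w * s * w⁻¹) = c s)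
    (hTlclass : ∀ s ∈ Tl, ∀ s' ∈ Tl, ∃ w ∈ W, w * s * w⁻¹ = s')
    (hTpclass : ∀ s ∈ Tp, ∀ s' ∈ Tp, ∃ w ∈ W, w * s * w⁻¹ = s')
    {sl sp : V ≃ₗ[K] V} (hsl : sl ∈ Tl) (hsp : sp ∈ Tp) :
    ∑ s ∈ T, c s = c sl * Tl.card + c sp * Tp.card := by
  have hT_union : T = Tl ∪ Tp := Finset.ext fun s => by rw [hTsplit, Finset.mem_union]
  rw [hT_union, Finset.sum_union hTdisj,
    sum_eq_card_mul_of_conj_class W Tl c (hc sl ((hTsplit sl).mpr (.inl hsl))) (hTlclass sl hsl),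
    sum_eq_card_mul_of_conj_class W Tp c (hc sp ((hTsplit sp).mpr (.inr hsp))) (hTpclass sp hsp)]

end ClassSum

section Coordinates

theorem bil_single_right (v : Vc r) (j : Fin r) : bil v (Pi.single j 1) = v j := by
  simp [bil, Pi.single_apply]

theorem linP_ne_zero {v : Vc r} (hv : v ≠ 0) : linP v ≠ 0 := by
  obtain ⟨j, hj⟩ := Function.ne_iff.mp hv
  intro h
  have := congrArg (MvPolynomial.coeff (Finsupp.single j 1)) h
  simp [linP, MvPolynomial.coeff_sum, MvPolynomial.coeff_C_mul, MvPolynomial.coeff_X,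
    Finsupp.single_left_inj] at this
  exact hj this

theorem trace_eq_sum_apply_single (f : Module.End ℂ (Vc r)) :
    LinearMap.trace ℂ _ f = ∑ j, f (Pi.single j 1) j := by
  rw [LinearMap.trace_eq_matrix_trace ℂ (Pi.basisFun ℂ (Fin r)), LinearMap.toMatrix_eq_toMatrix',
    Matrix.trace]
  simp [LinearMap.toMatrix'_apply]

end Coordinates

section DirDeriv

theorem dirDeriv_C (v : Vc r) (a : ℂ) : dirDeriv v (MvPolynomial.C a) = 0 := by
  simp [dirDeriv]

theorem dirDeriv_X (v : Vc r) (j : Fin r) :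
    dirDeriv v (MvPolynomial.X j) = MvPolynomial.C (v j) := by
  simp [dirDeriv, MvPolynomial.pderiv_X, Pi.single_apply, MvPolynomial.smul_eq_C_mul]

theorem dirDeriv_mul (v : Vc r) (p q : Pc r) :
    dirDeriv v (p * q) = dirDeriv v p * q + p * dirDeriv v q := by
  simp only [dirDeriv, LinearMap.sum_apply, LinearMap.smul_apply]
  simp [smul_add, Finset.sum_add_distrib, Finset.mul_sum, mul_comm, add_comm]

theorem dirDeriv_linP (v w : Vc r) : dirDeriv v (linP w) = MvPolynomial.C (bil v w) := by
  simp [linP, bil, dirDeriv_mul, dirDeriv_C, dirDeriv_X, mul_comm]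

theorem dirDeriv_smul_left (t : ℂ) (u : Vc r) : dirDeriv (t • u) = t • dirDeriv u := by
  simp [dirDeriv, mul_smul, Finset.smul_sum]

theorem dirDeriv_sum_left {ι : Type*} (S : Finset ι) (f : ι → Vc r) :
    dirDeriv (∑ s ∈ S, f s) = ∑ s ∈ S, dirDeriv (f s) := by
  simp only [dirDeriv, Finset.sum_apply, Finset.sum_smul]
  exact Finset.sum_comm

theorem pAct_C (g : Vc r ≃ₗ[ℂ] Vc r) (a : ℂ) : pAct g (MvPolynomial.C a) = MvPolynomial.C a :=
  MvPolynomial.aeval_C _ a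

theorem pAct_X (g : Vc r ≃ₗ[ℂ] Vc r) (j : Fin r) :
    pAct g (MvPolynomial.X j) = linP (g (Pi.single j 1)) :=
  MvPolynomial.aeval_X _ j

theorem dirDeriv_pAct (g : Vc r ≃ₗ[ℂ] Vc r) (v : Vc r) (q : Pc r) :
    dirDeriv v (pAct g q) = pAct g (dirDeriv (fun j => bil v (g (Pi.single j 1))) q) := by
  induction q using MvPolynomial.induction_on with
  | C a => rw [pAct_C, dirDeriv_C, dirDeriv_C, map_zero]
  | add p q hp hq => rw [map_add, map_add, hp, hq, map_add, map_add]
  | mul_X p j hp =>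
      rw [map_mul, pAct_X, dirDeriv_mul, dirDeriv_mul, dirDeriv_linP, dirDeriv_X,
        map_add, map_mul, map_mul, pAct_X, pAct_C, hp]

theorem pAct_dirDeriv_of_invariant {g : Vc r ≃ₗ[ℂ] Vc r} (hg : ∀ x y, bil (g x) (g y) = bil x y)
    {ψ : Pc r} (hψ : pAct g ψ = ψ) (v : Vc r) :
    pAct g (dirDeriv v ψ) = dirDeriv (g v) ψ := by
  have hcoord : (fun j => bil (g v) (g (Pi.single j 1))) = v := by
    funext j
    rw [hg, bil_single_right]
  conv_rhs => rw [← hψ, dirDeriv_pAct, hcoord]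

end DirDeriv

section Reflections

theorem linP_single (j : Fin r) : linP (Pi.single j 1 : Vc r) = MvPolynomial.X j := by
  simp [linP, Pi.single_apply]

theorem linP_sub (u v : Vc r) : linP (u - v) = linP u - linP v := by
  simp [linP, sub_mul]

theorem linP_smul (t : ℂ) (v : Vc r) : linP (t • v) = MvPolynomial.C t * linP v := by
  simp [linP, Finset.mul_sum, mul_assoc]

namespace IsReflRoot

variable {s : Vc r ≃ₗ[ℂ] Vc r} {a : Vc r}

theorem bil_self_ne_zero (h : IsReflRoot s a) : bil a a ≠ 0 := by
  obtain ⟨ha, hsa, hfix⟩ := h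
  intro h0
  have : a = -a := (hsa ▸ hfix a h0).symm
  exact ha (self_eq_neg.mp this)

theorem apply_eq (h : IsReflRoot s a) (v : Vc r) :
    s v = v - (2 * bil a v / bil a a) • a := by
  have horth : bil a (v - (bil a v / bil a a) • a) = 0 := by
    have : bil a (v - (bil a v / bil a a) • a) = bil a v - bil a v / bil a a * bil a a := by
      simp [bil, mul_sub, Finset.sum_sub_distrib, Finset.mul_sum, mul_left_comm]
    rw [this, div_mul_cancel₀ _ h.bil_self_ne_zero, sub_self]
  calc s v = s (v - (bil a v / bil a a) • a) + (bil a v / bil a a) • s a := by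
        rw [← map_smul, ← map_add, sub_add_cancel]
    _ = v - (2 * bil a v / bil a a) • a := by
        rw [h.2.2 _ horth, h.2.1]
        module

theorem trace_eq (h : IsReflRoot s a) :
    LinearMap.trace ℂ _ (s : Module.End ℂ (Vc r)) = r - 2 := by
  have ha := h.bil_self_ne_zero
  rw [trace_eq_sum_apply_single]
  simp only [LinearEquiv.coe_coe, h.apply_eq, bil_single_right, Pi.sub_apply, Pi.smul_apply,
    Pi.single_eq_same, smul_eq_mul, Finset.sum_sub_distrib]
  rw [show ∑ j, 2 * a j / bil a a * a j = 2 * bil a a / bil a a by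
    simp [bil, Finset.sum_div, Finset.mul_sum, mul_div_right_comm, mul_assoc]]
  simp [ha]

theorem linP_dvd_sub_pAct (h : IsReflRoot s a) (q : Pc r) : linP a ∣ q - pAct s q := by
  -- `s` fixes every variable modulo `αₛ`, hence acts trivially on `S(V)/(αₛ)`.
  let π := Ideal.Quotient.mkₐ ℂ (Ideal.span {linP a})
  have hmod : π.comp (pAct s) = π := by
    refine MvPolynomial.algHom_ext fun j => ?_
    rw [AlgHom.comp_apply, pAct_X, h.apply_eq, linP_sub, linP_single, linP_smul,
      Ideal.Quotient.mkₐ_eq_mk, Ideal.Quotient.eq, sub_sub_cancel_left]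
    exact neg_mem (Ideal.mul_mem_left _ _ (Ideal.subset_span rfl))
  rw [← Ideal.mem_span_singleton, ← Ideal.Quotient.eq]
  exact (congrArg (· q) hmod).symm

end IsReflRoot

end Reflections

section WeilAlgebra

theorem one_tmul_mul_injective {p : Pc r} (hp : p ≠ 0) :
    Function.Injective (((1 : Ec r) ⊗ₜ[ℂ] p) * · : Wc r → Wc r) := by
  have hmul : ∀ x : Wc r,
      ((1 : Ec r) ⊗ₜ[ℂ] p) * x = LinearMap.lTensor (Ec r) (LinearMap.mulLeft ℂ p) x := by
    intro x
    induction x using TensorProduct.induction_on with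
    | zero => simp
    | tmul e q => simp [Algebra.TensorProduct.tmul_mul_tmul]
    | add x y hx hy => rw [mul_add, hx, hy, map_add]
  have hinj := Module.Flat.lTensor_preserves_injective_linearMap (M := Ec r)
    (LinearMap.mulLeft ℂ p) (mul_right_injective₀ hp)
  intro x y hxy
  exact hinj (by simpa only [hmul] using hxy)

theorem wAct_one_tmul (g : Vc r ≃ₗ[ℂ] Vc r) (k : Pc r) :
    wAct g ((1 : Ec r) ⊗ₜ[ℂ] k) = (1 : Ec r) ⊗ₜ[ℂ] pAct g k := by
  simp [wAct]

theorem koszul_nab_one_tmul {s : Vc r ≃ₗ[ℂ] Vc r} {a : Vc r} (h : IsReflRoot s a)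
    (N : Wc r →ₗ[ℂ] Wc r)
    (hN : ∀ ω, ((1 : Ec r) ⊗ₜ[ℂ] linP a) * N ω = (exti a ⊗ₜ[ℂ] (1 : Pc r)) * (ω - wAct s ω))
    (δW : Wc r →ₗ[ℂ] Wc r) (hδ0 : ∀ k : Pc r, δW ((1 : Ec r) ⊗ₜ[ℂ] k) = 0)
    (hδ1 : ∀ (v : Vc r) (ω : Wc r), δW ((exti v ⊗ₜ[ℂ] (1 : Pc r)) * ω)
        = ((1 : Ec r) ⊗ₜ[ℂ] linP v) * ω - (exti v ⊗ₜ[ℂ] (1 : Pc r)) * δW ω)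
    (k : Pc r) :
    δW (N ((1 : Ec r) ⊗ₜ[ℂ] k)) = (1 : Ec r) ⊗ₜ[ℂ] (k - pAct s k) := by
  obtain ⟨m, hm⟩ := h.linP_dvd_sub_pAct k
  have hNk : N ((1 : Ec r) ⊗ₜ[ℂ] k) = (exti a ⊗ₜ[ℂ] (1 : Pc r)) * ((1 : Ec r) ⊗ₜ[ℂ] m) := by
    apply one_tmul_mul_injective (linP_ne_zero h.1)
    simp only [hN, wAct_one_tmul, ← TensorProduct.tmul_sub, hm,
      Algebra.TensorProduct.tmul_mul_tmul, one_mul, mul_one]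
  rw [hNk, hδ1, hδ0, mul_zero, sub_zero, Algebra.TensorProduct.tmul_mul_tmul, one_mul, hm]

end WeilAlgebra

theorem exists_sum_smul_reflections_eq_smul (hr : 0 < r) (W : Subgroup (Vc r ≃ₗ[ℂ] Vc r))
    (hWirr : ∀ p : Submodule ℂ (Vc r), (∀ g ∈ W, ∀ v ∈ p, g v ∈ p) → p = ⊥ ∨ p = ⊤)
    (T : Finset (Vc r ≃ₗ[ℂ] Vc r)) (hTconj : ∀ s ∈ T, ∀ w ∈ W, w * s * w⁻¹ ∈ T)
    (α : (Vc r ≃ₗ[ℂ] Vc r) → Vc r) (hα : ∀ s ∈ T, IsReflRoot s (α s))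
    (c : (Vc r ≃ₗ[ℂ] Vc r) → ℂ) (hc : ∀ s ∈ T, ∀ w ∈ W, c (w * s * w⁻¹) = c s) :
    ∃ μ : ℂ, μ * r = (∑ s ∈ T, c s) * (r - 2) ∧ ∀ u, ∑ s ∈ T, c s • s u = μ • u := by
  have : Nonempty (Fin r) := ⟨⟨0, hr⟩⟩
  let z : Module.End ℂ (Vc r) := ∑ s ∈ T, c s • (s : Module.End ℂ (Vc r))
  have hz : ∀ u, z u = ∑ s ∈ T, c s • s u := fun u => by simp [z]
  obtain ⟨μ, hμ⟩ := exists_eq_smul_of_commute_of_irreducible W hWirr z fun w hw u => by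
    rw [hz, hz, sum_smul_conj_apply_comm W T c hTconj hc hw]
  refine ⟨μ, ?_, fun u => (hz u).symm.trans (hμ u)⟩
  have hzμ : z = μ • LinearMap.id := LinearMap.ext hμ
  calc μ * r = LinearMap.trace ℂ _ z := by simp [hzμ]
    _ = (∑ s ∈ T, c s) * (r - 2) := by
      simp only [z, map_sum, map_smul, Finset.sum_mul, smul_eq_mul]
      exact Finset.sum_congr rfl fun s hs => by rw [(hα s hs).trace_eq]

theorem sum_smul_sub_pAct_dirDeriv (T : Finset (Vc r ≃ₗ[ℂ] Vc r)) (c : (Vc r ≃ₗ[ℂ] Vc r) → ℂ)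
    {ψ : Pc r} (horth : ∀ s ∈ T, ∀ x y, bil (s x) (s y) = bil x y)
    (hinv : ∀ s ∈ T, pAct s ψ = ψ) {μ : ℂ} {v : Vc r} (hμ : ∑ s ∈ T, c s • s v = μ • v) :
    ∑ s ∈ T, c s • (dirDeriv v ψ - pAct s (dirDeriv v ψ)) = (∑ s ∈ T, c s - μ) • dirDeriv v ψ := by
  have hpk : ∀ s ∈ T, c s • pAct s (dirDeriv v ψ) = dirDeriv (c s • s v) ψ := fun s hs => by
    rw [pAct_dirDeriv_of_invariant (horth s hs) (hinv s hs), dirDeriv_smul_left,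
      LinearMap.smul_apply]
  simp only [smul_sub, Finset.sum_sub_distrib]
  rw [Finset.sum_congr rfl hpk, ← LinearMap.sum_apply, ← dirDeriv_sum_left, hμ,
    dirDeriv_smul_left, LinearMap.smul_apply, ← Finset.sum_smul, sub_smul]

theorem statement12_general
    -- `W` is a finite irreducible reflection group on `V = ℂ^r` (complexified euclidean space),
    (W : Subgroup (Vc r ≃ₗ[ℂ] Vc r))
    (hWorth : ∀ g ∈ W, ∀ x y, bil (g x) (g y) = bil x y)
    (hWirr : ∀ p : Submodule ℂ (Vc r), (∀ g ∈ W, ∀ v ∈ p, g v ∈ p) → p = ⊥ ∨ p = ⊤)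
    -- `T` is the set of reflections of `W`, generating `W`, with roots `α s`,
    (T : Finset (Vc r ≃ₗ[ℂ] Vc r))
    (hT : ∀ g, g ∈ T ↔ g ∈ W ∧ ∃ a, IsReflRoot g a)
    (α : (Vc r ≃ₗ[ℂ] Vc r) → Vc r)
    (hα : ∀ s ∈ T, IsReflRoot s (α s))
    -- `ψ₁, …, ψᵣ` are homogeneous generators of `A^W` of degrees `2 ≤ d₁ ≤ … ≤ d_r`,
    (ψ : Fin r → Pc r)
    (hψinv : ∀ i, ∀ g ∈ W, pAct g (ψ i) = ψ i)
    -- `nab s` is the operator `∇ₛ = (αₛ ⊗ 1)·(1−s)/αₛ` on the Weil algebra, characterized by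
    -- `(1 ⊗ αₛ) · ∇ₛ(ω) = (αₛ ⊗ 1) · (ω − s·ω)` (multiplication by `1 ⊗ αₛ` is injective),
    (nab : (Vc r ≃ₗ[ℂ] Vc r) → Wc r →ₗ[ℂ] Wc r)
    (hnab : ∀ s ∈ T, ∀ ω, ((1 : Ec r) ⊗ₜ[ℂ] linP (α s)) * nab s ω
        = ((exti (α s)) ⊗ₜ[ℂ] (1 : Pc r)) * (ω - wAct s ω))
    -- `c : T → ℂ` is a function constant on conjugacy classes,
    (c : (Vc r ≃ₗ[ℂ] Vc r) → ℂ)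
    (hc : ∀ s ∈ T, ∀ w ∈ W, c (w * s * w⁻¹) = c s)
    -- `DcB` is the operator on `B` induced by the Dunkl differential `D_c = ∑_{s∈T} c(s)·∇ₛ`,
    (DcB : Bc ψ →ₗ[ℂ] Bc ψ)
    (hDcB : ∀ ω : Wc r, DcB (πB ψ ω) = πB ψ (∑ s ∈ T, c s • nab s ω))
    -- `T` is the disjoint union of the two conjugacy classes `T_ℓ` and `T_p`
    -- with representatives `s_ℓ ∈ T_ℓ` and `s_p ∈ T_p`,
    (Tl Tp : Finset (Vc r ≃ₗ[ℂ] Vc r))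
    (hTsplit : ∀ s, s ∈ T ↔ s ∈ Tl ∨ s ∈ Tp) (hTdisj : Disjoint Tl Tp)
    (hTlconj : ∀ s ∈ Tl, ∀ w ∈ W, w * s * w⁻¹ ∈ Tl)
    (hTpconj : ∀ s ∈ Tp, ∀ w ∈ W, w * s * w⁻¹ ∈ Tp)
    (hTlclass : ∀ s ∈ Tl, ∀ s' ∈ Tl, ∃ w ∈ W, w * s * w⁻¹ = s')
    (hTpclass : ∀ s ∈ Tp, ∀ s' ∈ Tp, ∃ w ∈ W, w * s * w⁻¹ = s')
    (sl sp : Vc r ≃ₗ[ℂ] Vc r) (hsl : sl ∈ Tl) (hsp : sp ∈ Tp)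
    -- `δW` is the Koszul differential on the Weil algebra, the odd derivation with
    -- `δ(v ⊗ 1) = 1 ⊗ v` and `δ(1 ⊗ f) = 0`; `δB` is the induced operator on `B`,
    (δW : Wc r →ₗ[ℂ] Wc r)
    (hδ0 : ∀ k : Pc r, δW ((1 : Ec r) ⊗ₜ[ℂ] k) = 0)
    (hδ1 : ∀ (v : Vc r) (ω : Wc r),
      δW ((exti v ⊗ₜ[ℂ] (1 : Pc r)) * ω)
        = ((1 : Ec r) ⊗ₜ[ℂ] linP v) * ω - (exti v ⊗ₜ[ℂ] (1 : Pc r)) * δW ω)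
    (δB : Bc ψ →ₗ[ℂ] Bc ψ)
    (hδB : ∀ ω : Wc r, δB (πB ψ ω) = πB ψ (δW ω))
    -- `|T|_c = c(s_ℓ)|T_ℓ| + c(s_p)|T_p|` is nonzero:
    (hTc : c sl * Tl.card + c sp * Tp.card ≠ 0) :
    ∀ (i : Fin r) (v : Vc r),
      δB (((r : ℂ) / (2 * (c sl * Tl.card + c sp * Tp.card))) • DcB (fcov ψ i v))
        = fcov ψ i v := by
  intro i v
  classical
  have hTW : ∀ s ∈ T, s ∈ W := fun s hs => ((hT s).mp hs).1
  have hTconj : ∀ s ∈ T, ∀ w ∈ W, w * s * w⁻¹ ∈ T := fun s hs w hw => by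
    rcases (hTsplit s).mp hs with h | h
    exacts [(hTsplit _).mpr (.inl (hTlconj s h w hw)), (hTsplit _).mpr (.inr (hTpconj s h w hw))]
  have hTc_eq : ∑ s ∈ T, c s = c sl * Tl.card + c sp * Tp.card :=
    sum_eq_of_two_conj_classes W T Tl Tp c hTsplit hTdisj hc hTlclass hTpclass hsl hsp
  obtain ⟨μ, hμr, hμ⟩ :=
    exists_sum_smul_reflections_eq_smul i.pos W hWirr T hTconj α hα c hc
  set k := dirDeriv v (ψ i)
  have hsum : ∑ s ∈ T, c s • (k - pAct s k) = (∑ s ∈ T, c s - μ) • k :=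
    sum_smul_sub_pAct_dirDeriv T c (fun s hs => hWorth s (hTW s hs))
      (fun s hs => hψinv i s (hTW s hs)) (hμ v)
  have hδ : δW (∑ s ∈ T, c s • nab s ((1 : Ec r) ⊗ₜ[ℂ] k))
      = (∑ s ∈ T, c s - μ) • ((1 : Ec r) ⊗ₜ[ℂ] k) := by
    rw [map_sum, Finset.sum_congr rfl fun s hs => by
      rw [map_smul, koszul_nab_one_tmul (hα s hs) (nab s) (hnab s hs) δW hδ0 hδ1,
        ← TensorProduct.tmul_smul], ← TensorProduct.tmul_sum, hsum, TensorProduct.tmul_smul]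
  have hr : (r : ℂ) ≠ 0 := Nat.cast_ne_zero.mpr i.pos.ne'
  rw [fcov, hDcB, map_smul, hδB, hδ, map_smul, smul_smul, ← hTc_eq]
  rw [← hTc_eq] at hTc
  convert one_smul ℂ _
  field_simp
  linear_combination -hμr

/-- Proposition 3.4 of De Concini–Papi.
For every `i = 1, …, r` and every `v ∈ V` one has `δ(uᵢ(v)) = fᵢ(v)`, where
`uᵢ = (r/(2|T|_c))·D_c∘fᵢ` and `|T|_c = c(s_ℓ)|T_ℓ| + c(s_p)|T_p|` is assumed nonzero. -/
theorem statement12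
    -- `W` is a finite irreducible reflection group on `V = ℂ^r` (complexified euclidean space),
    (W : Subgroup (Vc r ≃ₗ[ℂ] Vc r))
    (hWfin : Finite W)
    (hWorth : ∀ g ∈ W, ∀ x y, bil (g x) (g y) = bil x y)
    (hWirr : ∀ p : Submodule ℂ (Vc r), (∀ g ∈ W, ∀ v ∈ p, g v ∈ p) → p = ⊥ ∨ p = ⊤)
    -- `T` is the set of reflections of `W`, generating `W`, with roots `α s`,
    (T : Finset (Vc r ≃ₗ[ℂ] Vc r))
    (hT : ∀ g, g ∈ T ↔ g ∈ W ∧ ∃ a, IsReflRoot g a)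
    (hWgen : Subgroup.closure (T : Set _) = W)
    (α : (Vc r ≃ₗ[ℂ] Vc r) → Vc r)
    (hα : ∀ s ∈ T, IsReflRoot s (α s))
    -- `ψ₁, …, ψᵣ` are homogeneous generators of `A^W` of degrees `2 ≤ d₁ ≤ … ≤ d_r`,
    (ψ : Fin r → Pc r) (d : Fin r → ℕ)
    (hψhom : ∀ i, (ψ i).IsHomogeneous (d i))
    (hd2 : ∀ i, 2 ≤ d i) (hdmono : Monotone d)
    (hψinv : ∀ i, ∀ g ∈ W, pAct g (ψ i) = ψ i)
    (hψgen : ∀ q : Pc r, (∀ g ∈ W, pAct g q = q) ↔ q ∈ Algebra.adjoin ℂ (Set.range ψ))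
    (hψind : AlgebraicIndependent ℂ ψ)
    -- `nab s` is the operator `∇ₛ = (αₛ ⊗ 1)·(1−s)/αₛ` on the Weil algebra, characterized by
    -- `(1 ⊗ αₛ) · ∇ₛ(ω) = (αₛ ⊗ 1) · (ω − s·ω)` (multiplication by `1 ⊗ αₛ` is injective),
    (nab : (Vc r ≃ₗ[ℂ] Vc r) → Wc r →ₗ[ℂ] Wc r)
    (hnab : ∀ s ∈ T, ∀ ω, ((1 : Ec r) ⊗ₜ[ℂ] linP (α s)) * nab s ω
        = ((exti (α s)) ⊗ₜ[ℂ] (1 : Pc r)) * (ω - wAct s ω))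
    -- `Bact g` is the action of `g` on `B` induced by the action on the Weil algebra,
    (Bact : (Vc r ≃ₗ[ℂ] Vc r) → Bc ψ →ₐ[ℂ] Bc ψ)
    (hBact : ∀ g : Vc r ≃ₗ[ℂ] Vc r, ∀ ω : Wc r, Bact g (πB ψ ω) = πB ψ (wAct g ω))
    -- `c : T → ℂ` is a function constant on conjugacy classes,
    (c : (Vc r ≃ₗ[ℂ] Vc r) → ℂ)
    (hc : ∀ s ∈ T, ∀ w ∈ W, c (w * s * w⁻¹) = c s)
    -- `DcB` is the operator on `B` induced by the Dunkl differential `D_c = ∑_{s∈T} c(s)·∇ₛ`,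
    (DcB : Bc ψ →ₗ[ℂ] Bc ψ)
    (hDcB : ∀ ω : Wc r, DcB (πB ψ ω) = πB ψ (∑ s ∈ T, c s • nab s ω))
    -- `T` is the disjoint union of the two conjugacy classes `T_ℓ` and `T_p`
    -- with representatives `s_ℓ ∈ T_ℓ` and `s_p ∈ T_p`,
    (Tl Tp : Finset (Vc r ≃ₗ[ℂ] Vc r))
    (hTsplit : ∀ s, s ∈ T ↔ s ∈ Tl ∨ s ∈ Tp) (hTdisj : Disjoint Tl Tp)
    (hTlconj : ∀ s ∈ Tl, ∀ w ∈ W, w * s * w⁻¹ ∈ Tl)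
    (hTpconj : ∀ s ∈ Tp, ∀ w ∈ W, w * s * w⁻¹ ∈ Tp)
    (hTlclass : ∀ s ∈ Tl, ∀ s' ∈ Tl, ∃ w ∈ W, w * s * w⁻¹ = s')
    (hTpclass : ∀ s ∈ Tp, ∀ s' ∈ Tp, ∃ w ∈ W, w * s * w⁻¹ = s')
    (sl sp : Vc r ≃ₗ[ℂ] Vc r) (hsl : sl ∈ Tl) (hsp : sp ∈ Tp)
    -- `δW` is the Koszul differential on the Weil algebra, the odd derivation with
    -- `δ(v ⊗ 1) = 1 ⊗ v` and `δ(1 ⊗ f) = 0`; `δB` is the induced operator on `B`,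
    (δW : Wc r →ₗ[ℂ] Wc r)
    (hδ0 : ∀ k : Pc r, δW ((1 : Ec r) ⊗ₜ[ℂ] k) = 0)
    (hδ1 : ∀ (v : Vc r) (ω : Wc r),
      δW ((exti v ⊗ₜ[ℂ] (1 : Pc r)) * ω)
        = ((1 : Ec r) ⊗ₜ[ℂ] linP v) * ω - (exti v ⊗ₜ[ℂ] (1 : Pc r)) * δW ω)
    (δB : Bc ψ →ₗ[ℂ] Bc ψ)
    (hδB : ∀ ω : Wc r, δB (πB ψ ω) = πB ψ (δW ω))
    -- `|T|_c = c(s_ℓ)|T_ℓ| + c(s_p)|T_p|` is nonzero: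
    (hTc : c sl * Tl.card + c sp * Tp.card ≠ 0) :
    ∀ (i : Fin r) (v : Vc r),
      δB (((r : ℂ) / (2 * (c sl * Tl.card + c sp * Tp.card))) • DcB (fcov ψ i v))
        = fcov ψ i v :=
  statement12_general W hWorth hWirr T hT α hα ψ hψinv nab hnab c hc DcB hDcB Tl Tp hTsplit hTdisj
    hTlconj hTpconj hTlclass hTpclass sl sp hsl hsp δW hδ0 hδ1 δB hδB hTc
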